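/- Let γ > 0 and let φ : ℝ → ℝ be monotone nondecreasing with 0 ≤ φ(t) ≤ γ for all t ∈ ℝ. Then for all 2×2 real matrices A, B one has ⟨φ(det A)·cof A − φ(det B)·cof B, A − B⟩ ≥ −γ·|A − B|², where ⟨·,·⟩ is the Frobenius inner product and |·| the Frobenius norm. (This is the pointwise matrix form of the lower bound in Lemma 4.1(i) of the paper, applied with A, B the two gradient values in a difference quotient.) -/

import Mathlib

/-!
The cofactor map is linear and `⟨cof A, B⟩` is the polarization of `2 det`, so the pairing splits
as `(φ(det A) − φ(det B))(det A − det B) + (φ(det A) + φ(det B)) det(A − B)`. The first term is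
nonnegative by monotonicity of `φ`; the second is at least `−2γ |det(A − B)| ≥ −γ |A − B|²`,
because `2 |det M| ≤ |M|²` for every 2×2 matrix `M`.
-/

/-- The cofactor matrix of a 2×2 real matrix (transpose of the adjugate). -/
def cof (A : Matrix (Fin 2) (Fin 2) ℝ) : Matrix (Fin 2) (Fin 2) ℝ :=
  !![A 1 1, -(A 1 0); -(A 0 1), A 0 0]

/-- The Frobenius inner product of two 2×2 real matrices. -/
def frobInner (A B : Matrix (Fin 2) (Fin 2) ℝ) : ℝ :=
  ∑ i, ∑ j, A i j * B i j

/-- The Frobenius norm of a 2×2 real matrix. -/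
noncomputable def frobNorm (A : Matrix (Fin 2) (Fin 2) ℝ) : ℝ :=
  Real.sqrt (frobInner A A)

lemma frobInner_sub_left (A B C : Matrix (Fin 2) (Fin 2) ℝ) :
    frobInner (A - B) C = frobInner A C - frobInner B C := by
  simp only [frobInner, Matrix.sub_apply, sub_mul, Finset.sum_sub_distrib]

lemma frobInner_smul_left (r : ℝ) (A B : Matrix (Fin 2) (Fin 2) ℝ) :
    frobInner (r • A) B = r * frobInner A B := by
  simp only [frobInner, Matrix.smul_apply, smul_eq_mul, mul_assoc, Finset.mul_sum]

lemma frobInner_neg_right (A B : Matrix (Fin 2) (Fin 2) ℝ) :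
    frobInner A (-B) = -frobInner A B := by
  simp only [frobInner, Matrix.neg_apply, mul_neg, Finset.sum_neg_distrib]

lemma frobInner_self_nonneg (A : Matrix (Fin 2) (Fin 2) ℝ) : 0 ≤ frobInner A A :=
  Finset.sum_nonneg fun _ _ => Finset.sum_nonneg fun _ _ => mul_self_nonneg _

lemma frobNorm_sq (A : Matrix (Fin 2) (Fin 2) ℝ) : frobNorm A ^ 2 = frobInner A A :=
  Real.sq_sqrt (frobInner_self_nonneg A)

lemma frobInner_cof_self_sub (A B : Matrix (Fin 2) (Fin 2) ℝ) :
    frobInner (cof A) (A - B) = A.det - B.det + (A - B).det := by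
  simp only [frobInner, cof, Matrix.det_fin_two, Fin.sum_univ_two, Matrix.sub_apply,
    Matrix.of_apply, Matrix.cons_val', Matrix.cons_val_zero, Matrix.cons_val_one,
    Matrix.cons_val_fin_one]
  ring

lemma frobInner_cof_sub_self (A B : Matrix (Fin 2) (Fin 2) ℝ) :
    frobInner (cof B) (A - B) = A.det - B.det - (A - B).det := by
  rw [← neg_sub B A, frobInner_neg_right, frobInner_cof_self_sub, Matrix.det_neg, Fintype.card_fin]
  ring

lemma two_mul_abs_det_le_frobInner_self (A : Matrix (Fin 2) (Fin 2) ℝ) :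
    2 * |A.det| ≤ frobInner A A := by
  simp only [frobInner, Matrix.det_fin_two, Fin.sum_univ_two]
  rw [← abs_two, ← abs_mul]
  refine abs_le'.2 ⟨?_, ?_⟩
  · linear_combination sq_nonneg (A 0 0 - A 1 1) + sq_nonneg (A 0 1 + A 1 0)
  · linear_combination sq_nonneg (A 0 0 + A 1 1) + sq_nonneg (A 0 1 - A 1 0)

lemma frobInner_smul_cof_sub_smul_cof (p q : ℝ) (A B : Matrix (Fin 2) (Fin 2) ℝ) :
    frobInner (p • cof A - q • cof B) (A - B)
      = (p - q) * (A.det - B.det) + (p + q) * (A - B).det := by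
  rw [frobInner_sub_left, frobInner_smul_left, frobInner_smul_left, frobInner_cof_self_sub,
    frobInner_cof_sub_self]
  ring

theorem frobInner_cof_monotone_lower_bound_general
    (γ : ℝ) (φ : ℝ → ℝ) (hφ_mono : Monotone φ)
    (hφ_nonneg : ∀ t, 0 ≤ φ t) (hφ_le : ∀ t, φ t ≤ γ)
    (A B : Matrix (Fin 2) (Fin 2) ℝ) :
    frobInner (φ A.det • cof A - φ B.det • cof B) (A - B)
      ≥ -γ * (frobNorm (A - B)) ^ 2 := by
  have hγ : 0 ≤ γ := (hφ_nonneg 0).trans (hφ_le 0)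
  have hmono : 0 ≤ (φ A.det - φ B.det) * (A.det - B.det) :=
    (monovary_id_iff.2 hφ_mono).sub_mul_sub_nonneg B.det A.det
  have hdet := two_mul_abs_det_le_frobInner_self (A - B)
  have hsum : |φ A.det + φ B.det| ≤ 2 * γ := by
    rw [abs_of_nonneg (add_nonneg (hφ_nonneg _) (hφ_nonneg _))]
    linarith [hφ_le A.det, hφ_le B.det]
  have hcross : -(γ * frobInner (A - B) (A - B)) ≤ (φ A.det + φ B.det) * (A - B).det :=
    calc -(γ * frobInner (A - B) (A - B)) ≤ -(γ * (2 * |(A - B).det|)) := by gcongr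
      _ = -(2 * γ * |(A - B).det|) := by ring
      _ ≤ -|(φ A.det + φ B.det) * (A - B).det| := by
          rw [abs_mul]; gcongr
      _ ≤ _ := neg_abs_le _
  rw [frobInner_smul_cof_sub_smul_cof, frobNorm_sq, ge_iff_le]
  linarith

/-- Pointwise matrix form of the lower bound, Lemma 4.1(i) of the paper:
if `φ` is monotone with `0 ≤ φ ≤ γ`, then
`⟨φ(det A)·cof A − φ(det B)·cof B, A − B⟩ ≥ −γ·|A − B|²`. -/
theorem frobInner_cof_monotone_lower_bound
    (γ : ℝ) (hγ : 0 < γ) (φ : ℝ → ℝ) (hφ_mono : Monotone φ)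
    (hφ_nonneg : ∀ t, 0 ≤ φ t) (hφ_le : ∀ t, φ t ≤ γ)
    (A B : Matrix (Fin 2) (Fin 2) ℝ) :
    frobInner (φ A.det • cof A - φ B.det • cof B) (A - B)
      ≥ -γ * (frobNorm (A - B)) ^ 2 :=
  frobInner_cof_monotone_lower_bound_general γ φ hφ_mono hφ_nonneg hφ_le A B
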